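/- arXiv:1404.3906 — 2 statements merged into one kernel-verified Lean document; each statement's English description precedes it below -/
import Mathlib

section
/- Let n ≥ 4 and let q ≥ 1 be the integer with 2^q ≤ n < 2^{q+1}, and set u_min(n) = (2^{q−1} − (n mod 2^{q−1})) mod 2^{q−1}. Then (i) every factor w of the Thue–Morse word t of length n uniquely determines at least u_min(n) letters: there exist natural numbers ℓ₁, ℓ₂ with ℓ₁ + ℓ₂ = u_min(n) and exactly one pair of binary words (v₁, v₂) with |v₁| = ℓ₁ and |v₂| = ℓ₂ such that the concatenation v₁ w v₂ is a factor of t; and (ii) the bound is sharp: there exists a factor w of t of length n such that for all ℓ₁, ℓ₂ with ℓ₁ + ℓ₂ > u_min(n) there are at least two distinct pairs (v₁, v₂) of binary words with |v₁| = ℓ₁, |v₂| = ℓ₂ and v₁ w v₂ a factor of t. -/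
/-- The Thue–Morse sequence: sum of binary digits of `n`, mod 2. -/
def tm (n : ℕ) : Fin 2 := Fin.ofNat 2 (Nat.digits 2 n).sum

/-- The factor of the Thue–Morse word of length `n` starting at position `i`. -/
def tmWord (i n : ℕ) : List (Fin 2) := (List.range n).map (fun j => tm (i + j))

/-- A binary word is a factor of the Thue–Morse word. -/
def IsFactor (w : List (Fin 2)) : Prop := ∃ i : ℕ, w = tmWord i w.length

/-- Number of occurrences of the word `x` as a factor of `u`. -/
def occCount (u x : List (Fin 2)) : ℕ :=
  ((List.range u.length).filter (fun i => (u.drop i).take x.length = x)).length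

/-- Two binary words (of equal length) are 2-abelian equivalent: same first letter,
same last letter, and the same number of occurrences of every word of length 2. -/
def TwoAbelianEquiv (u v : List (Fin 2)) : Prop :=
  u.length = v.length ∧ u.take 1 = v.take 1 ∧
  u.drop (u.length - 1) = v.drop (v.length - 1) ∧
  ∀ x : List (Fin 2), x.length = 2 → occCount u x = occCount v x

/-- `P n` is the 2-abelian complexity of the Thue–Morse word: the number of
2-abelian equivalence classes of factors of length `n`. -/
noncomputable def P (n : ℕ) : ℕ :=
  Nat.card (Quot (fun u v : {w : List (Fin 2) // w.length = n ∧ IsFactor w} =>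
    TwoAbelianEquiv u.1 v.1))

/-- `pword w` counts the pairs in `w`: the total number of occurrences of `00` and `11`. -/
def pword (w : List (Fin 2)) : ℕ := occCount w [0, 0] + occCount w [1, 1]

/-- The set of possible pair counts of Thue–Morse factors of length `n`. -/
def pairs (n : ℕ) : Set ℕ :=
  { m | ∃ w : List (Fin 2), w.length = n ∧ IsFactor w ∧ pword w = m }

/-- The set of possible pair counts of Thue–Morse factors of length `n`
occurring at some odd position (pure odd factors). -/
def PAIRS (n : ℕ) : Set ℕ := { m | ∃ i : ℕ, i % 2 = 1 ∧ pword (tmWord i n) = m }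

/-!
The Thue–Morse word `t` is the fixed point of `μ : 0 ↦ 01, 1 ↦ 10`, and a factor of length at
least 4 occurs only at positions of one parity. So a factor `w` of length `n` occurring at
`2j + a`, completed by the `a` and `b` letters that fill its first and last blocks, is `μ(w')` for
a factor `w'` of length `n' = (n + a + b) / 2`, and every occurrence of `w` comes from one of `w'`.
A unique extension of `w'` by `λ₁, λ₂` letters thus gives one of `w` by `2λ₁ + a, 2λ₂ + b`, and
the least `u` with `2^k ∣ n + u` obeys the same recursion `u = 2u' + a + b` (with `2^(k-1)` and
`n'`), unless it vanishes; this proves (i) by induction on `k`.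

For (ii), `n + u_min(n) = 2^(q-1) s` with `2 ≤ s ≤ 4`, and each such `s` is the length of a factor
with two occurrences that differ both just before and just after them. Their images under
`μ^(q-1)` keep this property, so the prefix of length `n` has two extensions as soon as more than
`u_min(n)` letters are added.
-/

lemma tm_two_mul (k : ℕ) : tm (2 * k) = tm k := by
  rcases k.eq_zero_or_pos with rfl | hk
  · rfl
  simp [tm, Nat.digits_def' one_lt_two (by omega : 0 < 2 * k)]

lemma tm_two_mul_add_one (k : ℕ) : tm (2 * k + 1) = tm k + 1 := by
  simp only [tm, Nat.digits_def' one_lt_two (by omega : 0 < 2 * k + 1),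
    show (2 * k + 1) / 2 = k by omega]
  ext
  simp [Fin.val_add]
  omega

lemma tm_two_mul_add_one_ne (k : ℕ) : tm (2 * k + 1) ≠ tm (2 * k) := by
  rw [tm_two_mul_add_one, tm_two_mul]
  generalize tm k = x
  decide +revert

lemma tm_two_pow_mul_add (k : ℕ) : ∀ a j, j < 2 ^ k → tm (2 ^ k * a + j) = tm a + tm j := by
  induction k with
  | zero => intro a j hj; simp [show j = 0 by omega, show tm 0 = 0 from rfl]
  | succ k ih =>
    intro a j hj
    obtain ⟨r, hr, rfl | rfl⟩ : ∃ r, r < 2 ^ k ∧ (j = 2 * r ∨ j = 2 * r + 1) :=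
      ⟨j / 2, by rw [pow_succ] at hj; omega, by omega⟩
    · rw [pow_succ, mul_comm _ 2, mul_assoc, ← mul_add, tm_two_mul, tm_two_mul, ih a r hr]
    · rw [pow_succ, mul_comm _ 2, mul_assoc, ← add_assoc, ← mul_add, tm_two_mul_add_one,
        tm_two_mul_add_one, ih a r hr, add_assoc]

lemma tm_three_mul_two_pow_add {K x : ℕ} (hx : x < 2 ^ K) : tm (3 * 2 ^ K + x) = tm x := by
  rw [mul_comm, tm_two_pow_mul_add K 3 x hx, show tm 3 = 0 from rfl, zero_add]

lemma tm_no_cube (k : ℕ) : ¬ (tm k = tm (k + 1) ∧ tm (k + 1) = tm (k + 2)) := by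
  rintro ⟨h₁, h₂⟩
  obtain ⟨s, rfl | rfl⟩ : ∃ s, k = 2 * s ∨ k = 2 * s + 1 := ⟨k / 2, by omega⟩
  · exact tm_two_mul_add_one_ne s h₁.symm
  · rw [show 2 * s + 1 + 1 = 2 * (s + 1) by ring, show 2 * s + 1 + 2 = 2 * (s + 1) + 1 by ring]
      at h₂
    exact tm_two_mul_add_one_ne (s + 1) h₂.symm

def Agree (i j n : ℕ) : Prop := ∀ d < n, tm (i + d) = tm (j + d)

namespace Agree

variable {i j k m n : ℕ}

lemma symm (h : Agree i j n) : Agree j i n := fun d hd => (h d hd).symm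

lemma trans (h : Agree i j n) (h' : Agree j k n) : Agree i k n :=
  fun d hd => (h d hd).trans (h' d hd)

lemma mono (h : Agree i j n) (hmn : m ≤ n) : Agree i j m := fun d hd => h d (by omega)

lemma double (h : Agree i j n) : Agree (2 * i) (2 * j) (2 * n) := by
  intro d hd
  obtain ⟨e, rfl | rfl⟩ : ∃ e, d = 2 * e ∨ d = 2 * e + 1 := ⟨d / 2, by omega⟩
  · rw [← mul_add, ← mul_add, tm_two_mul, tm_two_mul, h e (by omega)]
  · rw [← add_assoc, ← add_assoc, ← mul_add, ← mul_add, tm_two_mul_add_one,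
      tm_two_mul_add_one, h e (by omega)]

/-- `tm (i + f)` can be read off either letter of its image `tm (2 * (i + f) + r)`. -/
lemma half {a : ℕ} (h : Agree (2 * i + a) (2 * j + a) n) (ha : a < 2) (hn : 0 < n)
    (hm : 2 * m ≤ n + a + 1) : Agree i j m := by
  intro f hf
  rcases Nat.eq_zero_or_pos f with rfl | hf₀
  · have h₀ := h 0 hn
    rcases (show a = 0 ∨ a = 1 by omega) with rfl | rfl
    · simpa [tm_two_mul] using h₀
    · simpa [tm_two_mul_add_one] using h₀
  · have h₁ := h (2 * f - a) (by omega)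
    rwa [show 2 * i + a + (2 * f - a) = 2 * (i + f) by omega,
      show 2 * j + a + (2 * f - a) = 2 * (j + f) by omega, tm_two_mul, tm_two_mul] at h₁

/-- Agreement would force `tm t = tm (t + 1) = tm (t + 2)`. -/
lemma not_two_mul_two_mul_add_one (s t : ℕ) : ¬ Agree (2 * s) (2 * t + 1) 4 := by
  intro h
  have e₀ := h 0 (by norm_num)
  have e₁ := h 1 (by norm_num)
  have e₂ := h 2 (by norm_num)
  have e₃ := h 3 (by norm_num)
  rw [add_zero, add_zero, tm_two_mul, tm_two_mul_add_one] at e₀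
  rw [show 2 * t + 1 + 1 = 2 * (t + 1) by ring, tm_two_mul_add_one, tm_two_mul] at e₁
  rw [show 2 * s + 2 = 2 * (s + 1) by ring, show 2 * t + 1 + 2 = 2 * (t + 1) + 1 by ring,
    tm_two_mul, tm_two_mul_add_one] at e₂
  rw [show 2 * s + 3 = 2 * (s + 1) + 1 by ring, show 2 * t + 1 + 3 = 2 * (t + 2) by ring,
    tm_two_mul_add_one, tm_two_mul] at e₃
  apply tm_no_cube t
  revert e₀ e₁ e₂ e₃
  generalize tm s = x, tm (s + 1) = x', tm t = y, tm (t + 1) = y', tm (t + 2) = y''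
  decide +revert

lemma mod_two_eq (h : Agree i j n) (hn : 4 ≤ n) : i % 2 = j % 2 := by
  have opposite : ∀ i j, i % 2 = 0 → j % 2 = 1 → ¬ Agree i j 4 := fun i j hi hj => by
    rw [← Nat.div_add_mod i 2, ← Nat.div_add_mod j 2, hi, hj, add_zero]
    exact not_two_mul_two_mul_add_one _ _
  rcases Nat.mod_two_eq_zero_or_one i with hi | hi <;>
    rcases Nat.mod_two_eq_zero_or_one j with hj | hj
  · rw [hi, hj]
  · exact absurd (h.mono hn) (opposite i j hi hj)
  · exact absurd (h.symm.mono hn) (opposite j i hj hi)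
  · rw [hi, hj]

end Agree

lemma agree_three_mul_two_pow_add {K x n : ℕ} (h : x + n ≤ 2 ^ K) :
    Agree x (3 * 2 ^ K + x) n := fun d hd => by
  rw [add_assoc, tm_three_mul_two_pow_add (by omega)]

lemma exists_agree_ge (i n L : ℕ) : ∃ p, L ≤ p ∧ Agree i p n := by
  have hK : i + n + L < 2 ^ (i + n + L) := Nat.lt_two_pow_self
  exact ⟨_, by omega, agree_three_mul_two_pow_add (K := i + n + L) (by omega)⟩

@[simp] lemma tmWord_length (i n : ℕ) : (tmWord i n).length = n := by
  simp [tmWord]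

lemma isFactor_tmWord (i n : ℕ) : IsFactor (tmWord i n) := ⟨i, by simp⟩

lemma tmWord_eq_tmWord_iff {i j n : ℕ} : tmWord i n = tmWord j n ↔ Agree i j n := by
  simp [tmWord, List.map_inj_left, Agree]

lemma tmWord_add (i m n : ℕ) : tmWord i (m + n) = tmWord i m ++ tmWord (i + m) n := by
  simp [tmWord, List.range_add, add_assoc]

lemma tmWord_add_add (g a b c : ℕ) :
    tmWord g (a + b + c) = tmWord g a ++ tmWord (g + a) b ++ tmWord (g + a + b) c := by
  rw [tmWord_add, tmWord_add, add_assoc]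

/-- The least `y` such that `m ∣ n + y` (for `0 < m`). -/
def gapToMultiple (m n : ℕ) : ℕ := (m - n % m) % m

section gapToMultiple

variable {m n : ℕ}

lemma gapToMultiple_lt (hm : 0 < m) : gapToMultiple m n < m := Nat.mod_lt _ hm

lemma dvd_add_gapToMultiple (hm : 0 < m) : m ∣ n + gapToMultiple m n := by
  have := Nat.mod_lt n hm
  rcases Nat.eq_zero_or_pos (n % m) with h | h
  · rw [gapToMultiple, h, Nat.sub_zero, Nat.mod_self, add_zero]
    exact Nat.dvd_of_mod_eq_zero h
  · rw [gapToMultiple, Nat.mod_eq_of_lt (by omega : m - n % m < m)]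
    exact ⟨n / m + 1, by have := Nat.div_add_mod n m; rw [mul_add]; omega⟩

lemma gapToMultiple_eq {y : ℕ} (hy : y < m) (h : m ∣ n + y) : gapToMultiple m n = y := by
  have hm : 0 < m := by omega
  have hmod : n + gapToMultiple m n ≡ n + y [MOD m] :=
    (Nat.modEq_zero_iff_dvd.2 (dvd_add_gapToMultiple hm)).trans
      (Nat.modEq_zero_iff_dvd.2 h).symm
  exact Nat.ModEq.eq_of_lt_of_lt (Nat.ModEq.add_left_cancel' n hmod) (gapToMultiple_lt hm) hy

lemma gapToMultiple_two_mul {n' a b : ℕ} (hm : 0 < m) (hn : ¬ 2 * m ∣ n) (ha : a < 2)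
    (hb : b < 2) (hn' : 2 * n' = n + a + b) :
    gapToMultiple (2 * m) n = 2 * gapToMultiple m n' + a + b := by
  obtain ⟨s, hs⟩ := dvd_add_gapToMultiple (n := n') hm
  have hlt := gapToMultiple_lt (n := n') hm
  have h2s : 2 * m * s = 2 * (m * s) := mul_assoc 2 m s
  apply gapToMultiple_eq
  · refine lt_of_le_of_ne (by omega) fun heq => hn ⟨s - 1, ?_⟩
    rw [Nat.mul_sub, mul_one]
    omega
  · exact ⟨s, by omega⟩

end gapToMultiple

/-- Every occurrence of the factor of length `n` at `i`, extended by `l₁` letters to the left and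
`l₂` to the right, reads the same word; `g` and `g'` are the starts of the extended occurrences. -/
def DeterminesExtension (i n l₁ l₂ : ℕ) : Prop :=
  ∀ g g', Agree i (g + l₁) n → Agree i (g' + l₁) n → Agree g g' (l₁ + n + l₂)

lemma determinesExtension_zero (i n : ℕ) : DeterminesExtension i n 0 0 :=
  fun _ _ h h' => by simpa using h.symm.trans h'

/-- The extension of a factor of length at least 4 is the image under `0 ↦ 01, 1 ↦ 10` of the
extension of its preimage. -/
lemma DeterminesExtension.two_mul_add {j n' l₁ l₂ a b n : ℕ}
    (h : DeterminesExtension j n' l₁ l₂) (ha : a < 2) (hb : b < 2) (hn : 4 ≤ n)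
    (hn' : 2 * n' = n + a + b) :
    DeterminesExtension (2 * j + a) n (2 * l₁ + a) (2 * l₂ + b) := by
  have preimage : ∀ g, Agree (2 * j + a) (g + (2 * l₁ + a)) n →
      ∃ h, g = 2 * h ∧ Agree j (h + l₁) n' := by
    intro g hg
    have hpar := hg.mod_two_eq hn
    refine ⟨g / 2, by omega, ?_⟩
    rw [show g + (2 * l₁ + a) = 2 * (g / 2 + l₁) + a by omega] at hg
    exact hg.half ha (by omega) (by omega)
  intro g g' hg hg'
  obtain ⟨h₁, rfl, hh₁⟩ := preimage g hg
  obtain ⟨h₂, rfl, hh₂⟩ := preimage g' hg'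
  have := (h h₁ h₂ hh₁ hh₂).double
  rwa [show 2 * (l₁ + n' + l₂) = 2 * l₁ + a + n + (2 * l₂ + b) by omega] at this

theorem exists_determinesExtension (k : ℕ) :
    ∀ n i, 2 ^ (k + 1) ≤ n →
      ∃ l₁ l₂, l₁ + l₂ = gapToMultiple (2 ^ k) n ∧ DeterminesExtension i n l₁ l₂ := by
  induction k with
  | zero =>
    exact fun n i _ => ⟨0, 0, by simp [gapToMultiple, Nat.mod_one], determinesExtension_zero i n⟩
  | succ k ih =>
    intro n i hn
    by_cases hdvd : 2 ^ (k + 1) ∣ n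
    · exact ⟨0, 0, (gapToMultiple_eq (by positivity) (by simpa using hdvd)).symm,
        determinesExtension_zero i n⟩
    set a := i % 2
    set b := (i + n) % 2
    have hn' : 2 * ((n + a + b) / 2) = n + a + b := by omega
    have h2k : 2 ^ (k + 2) = 4 * 2 ^ k := by rw [pow_add]; ring
    obtain ⟨l₁, l₂, hl, hdet⟩ := ih ((n + a + b) / 2) (i / 2) (by rw [pow_succ]; omega)
    refine ⟨2 * l₁ + a, 2 * l₂ + b, ?_, ?_⟩
    · rw [pow_succ', gapToMultiple_two_mul (by positivity) (by rwa [← pow_succ'])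
        (Nat.mod_lt _ two_pos) (Nat.mod_lt _ two_pos) hn']
      omega
    · rw [← Nat.div_add_mod i 2]
      exact hdet.two_mul_add (Nat.mod_lt _ two_pos) (Nat.mod_lt _ two_pos)
        (by have := Nat.one_le_two_pow (n := k); omega) hn'

lemma isFactor_tmWord_append_append {i x n l₁ l₂ : ℕ} (hx : l₁ ≤ x) (h : Agree i x n) :
    IsFactor (tmWord (x - l₁) l₁ ++ tmWord i n ++ tmWord (x + n) l₂) := by
  have hw : tmWord i n = tmWord (x - l₁ + l₁) n := by
    rw [Nat.sub_add_cancel hx, tmWord_eq_tmWord_iff]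
    exact h
  rw [hw, show x + n = x - l₁ + l₁ + n by omega, ← tmWord_add_add]
  exact isFactor_tmWord _ _

lemma eq_tmWord_of_isFactor_append_append {v₁ w v₂ : List (Fin 2)}
    (h : IsFactor (v₁ ++ w ++ v₂)) :
    ∃ g, v₁ ++ w ++ v₂ = tmWord g (v₁.length + w.length + v₂.length) ∧
      w = tmWord (g + v₁.length) w.length := by
  obtain ⟨g, hg⟩ := h
  simp only [List.length_append] at hg
  refine ⟨g, hg, ?_⟩
  rw [tmWord_add_add] at hg
  exact (List.append_inj (List.append_inj hg (by simp)).1 (by simp)).2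

lemma DeterminesExtension.existsUnique {i n l₁ l₂ : ℕ} (h : DeterminesExtension i n l₁ l₂) :
    ∃! vv : List (Fin 2) × List (Fin 2),
      vv.1.length = l₁ ∧ vv.2.length = l₂ ∧ IsFactor (vv.1 ++ tmWord i n ++ vv.2) := by
  obtain ⟨p, hp, hip⟩ := exists_agree_ge i n l₁
  refine existsUnique_of_exists_of_unique ⟨(tmWord (p - l₁) l₁, tmWord (p + n) l₂), by simp,
    by simp, isFactor_tmWord_append_append hp hip⟩ ?_
  rintro ⟨v₁, v₂⟩ ⟨u₁, u₂⟩ ⟨rfl, hv₂, hv⟩ ⟨hu₁, hu₂, hu⟩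
  obtain ⟨g, hg, hgw⟩ := eq_tmWord_of_isFactor_append_append hv
  obtain ⟨g', hg', hg'w⟩ := eq_tmWord_of_isFactor_append_append hu
  simp only [tmWord_length, hv₂, hu₁, hu₂] at hg hg' hgw hg'w
  have hvu : v₁ ++ tmWord i n ++ v₂ = u₁ ++ tmWord i n ++ u₂ := by
    rw [hg, hg', tmWord_eq_tmWord_iff]
    exact h g g' (tmWord_eq_tmWord_iff.1 hgw) (tmWord_eq_tmWord_iff.1 hg'w)
  obtain ⟨hvu₁, rfl⟩ := List.append_inj hvu (by simp [hu₁])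
  rw [List.append_cancel_right hvu₁]

def BispecialPair (N p p' : ℕ) : Prop :=
  0 < p ∧ 0 < p' ∧ Agree p p' N ∧ tm (p - 1) ≠ tm (p' - 1) ∧ tm (p + N) ≠ tm (p' + N)

namespace BispecialPair

variable {N p p' : ℕ}

lemma double (h : BispecialPair N p p') : BispecialPair (2 * N) (2 * p) (2 * p') := by
  obtain ⟨hp, hp', hagree, hleft, hright⟩ := h
  refine ⟨by omega, by omega, hagree.double, ?_, ?_⟩
  · rwa [show 2 * p - 1 = 2 * (p - 1) + 1 by omega, show 2 * p' - 1 = 2 * (p' - 1) + 1 by omega,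
      tm_two_mul_add_one, tm_two_mul_add_one, Ne, add_left_inj]
  · rwa [← mul_add, ← mul_add, tm_two_mul, tm_two_mul]

lemma two_pow_mul (h : BispecialPair N p p') (k : ℕ) :
    BispecialPair (2 ^ k * N) (2 ^ k * p) (2 ^ k * p') := by
  induction k with
  | zero => simpa using h
  | succ k ih => simpa only [pow_succ', mul_assoc] using ih.double

lemma shift (h : BispecialPair N p p') {K : ℕ} (hp : p + N < 2 ^ K) (hp' : p' + N < 2 ^ K) :
    BispecialPair N (3 * 2 ^ K + p) (3 * 2 ^ K + p') := by
  obtain ⟨h₀, h₀', hagree, hleft, hright⟩ := h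
  refine ⟨by omega, by omega, ?_, ?_, ?_⟩
  · exact (agree_three_mul_two_pow_add (by omega)).symm.trans
      (hagree.trans (agree_three_mul_two_pow_add (by omega)))
  · rwa [Nat.add_sub_assoc h₀, Nat.add_sub_assoc h₀', tm_three_mul_two_pow_add (by omega),
      tm_three_mul_two_pow_add (by omega)]
  · rwa [add_assoc, add_assoc, tm_three_mul_two_pow_add hp, tm_three_mul_two_pow_add hp']

lemma exists_ne_extensions_of_le {n u l₁ l₂ : ℕ} (h : BispecialPair (n + u) p p')
    (hp : l₁ ≤ p) (hp' : l₁ ≤ p') (hl : u < l₁ + l₂) :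
    ∃ vv yy : List (Fin 2) × List (Fin 2), vv ≠ yy ∧
      vv.1.length = l₁ ∧ vv.2.length = l₂ ∧
      yy.1.length = l₁ ∧ yy.2.length = l₂ ∧
      IsFactor (vv.1 ++ tmWord p n ++ vv.2) ∧ IsFactor (yy.1 ++ tmWord p n ++ yy.2) := by
  obtain ⟨-, -, hagree, hleft, hright⟩ := h
  refine ⟨(tmWord (p - l₁) l₁, tmWord (p + n) l₂), (tmWord (p' - l₁) l₁, tmWord (p' + n) l₂),
    ?_, by simp, by simp, by simp, by simp, isFactor_tmWord_append_append hp fun _ _ => rfl,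
    isFactor_tmWord_append_append hp' (hagree.mono (by omega))⟩
  simp only [ne_eq, Prod.mk.injEq, tmWord_eq_tmWord_iff, not_and_or]
  rcases Nat.eq_zero_or_pos l₁ with rfl | hl₁
  · exact Or.inr fun hr => hright (by simpa [add_assoc] using hr u (by omega))
  · refine Or.inl fun hl => hleft ?_
    simpa [show p - l₁ + (l₁ - 1) = p - 1 by omega, show p' - l₁ + (l₁ - 1) = p' - 1 by omega]
      using hl (l₁ - 1) (by omega)

lemma exists_ne_extensions {n u l₁ l₂ : ℕ} (h : BispecialPair (n + u) p p') (hl : u < l₁ + l₂) :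
    ∃ vv yy : List (Fin 2) × List (Fin 2), vv ≠ yy ∧
      vv.1.length = l₁ ∧ vv.2.length = l₂ ∧
      yy.1.length = l₁ ∧ yy.2.length = l₂ ∧
      IsFactor (vv.1 ++ tmWord p n ++ vv.2) ∧ IsFactor (yy.1 ++ tmWord p n ++ yy.2) := by
  set K := p + p' + n + u + l₁
  have hK : K < 2 ^ K := Nat.lt_two_pow_self
  have hw : tmWord p n = tmWord (3 * 2 ^ K + p) n :=
    tmWord_eq_tmWord_iff.2 (agree_three_mul_two_pow_add (by omega))
  rw [hw]
  exact (h.shift (K := K) (by omega) (by omega)).exists_ne_extensions_of_le (by omega)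
    (by omega) hl

lemma exists_of_two_le_of_le_four {s : ℕ} (h₂ : 2 ≤ s) (h₄ : s ≤ 4) :
    ∃ p p', BispecialPair s p p' := by
  interval_cases s
  · exact ⟨3, 6, by unfold BispecialPair Agree; decide⟩
  · exact ⟨3, 10, by unfold BispecialPair Agree; decide⟩
  · exact ⟨6, 12, by unfold BispecialPair Agree; decide⟩

end BispecialPair

theorem thueMorse_unique_extension_lower_bound_general (n q : ℕ) (hq : 1 ≤ q)
    (h1 : 2 ^ q ≤ n) (h2 : n < 2 ^ (q + 1)) :
    (∀ w : List (Fin 2), w.length = n → IsFactor w →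
      ∃ l₁ l₂ : ℕ, l₁ + l₂ = (2 ^ (q - 1) - n % 2 ^ (q - 1)) % 2 ^ (q - 1) ∧
        ∃! vv : List (Fin 2) × List (Fin 2),
          vv.1.length = l₁ ∧ vv.2.length = l₂ ∧ IsFactor (vv.1 ++ w ++ vv.2)) ∧
    (∃ w : List (Fin 2), w.length = n ∧ IsFactor w ∧
      ∀ l₁ l₂ : ℕ, (2 ^ (q - 1) - n % 2 ^ (q - 1)) % 2 ^ (q - 1) < l₁ + l₂ →
        ∃ vv yy : List (Fin 2) × List (Fin 2), vv ≠ yy ∧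
          vv.1.length = l₁ ∧ vv.2.length = l₂ ∧
          yy.1.length = l₁ ∧ yy.2.length = l₂ ∧
          IsFactor (vv.1 ++ w ++ vv.2) ∧ IsFactor (yy.1 ++ w ++ yy.2)) := by
  set m := 2 ^ (q - 1)
  have hm : 2 * m = 2 ^ q := by rw [← pow_succ', Nat.sub_add_cancel hq]
  refine ⟨?_, ?_⟩
  · rintro w rfl ⟨i, hi⟩
    obtain ⟨l₁, l₂, hl, hdet⟩ :=
      exists_determinesExtension (q - 1) w.length i (by rwa [pow_succ', hm])
    exact ⟨l₁, l₂, hl, hi ▸ hdet.existsUnique⟩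
  · obtain ⟨s, hs⟩ := dvd_add_gapToMultiple (n := n) (by positivity : 0 < m)
    have hgap := gapToMultiple_lt (n := n) (by positivity : 0 < m)
    have h4m : 2 ^ (q + 1) = 4 * m := by rw [pow_succ, ← hm]; ring
    obtain ⟨p, p', hpp⟩ := BispecialPair.exists_of_two_le_of_le_four (s := s) (by nlinarith)
      (by nlinarith)
    exact ⟨tmWord (m * p) n, tmWord_length _ _, isFactor_tmWord _ _,
      fun l₁ l₂ hl => (hs ▸ hpp.two_pow_mul (q - 1)).exists_ne_extensions hl⟩

theorem thueMorse_unique_extension_lower_bound (n q : ℕ) (hn : 4 ≤ n) (hq : 1 ≤ q)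
    (h1 : 2 ^ q ≤ n) (h2 : n < 2 ^ (q + 1)) :
    (∀ w : List (Fin 2), w.length = n → IsFactor w →
      ∃ l₁ l₂ : ℕ, l₁ + l₂ = (2 ^ (q - 1) - n % 2 ^ (q - 1)) % 2 ^ (q - 1) ∧
        ∃! vv : List (Fin 2) × List (Fin 2),
          vv.1.length = l₁ ∧ vv.2.length = l₂ ∧ IsFactor (vv.1 ++ w ++ vv.2)) ∧
    (∃ w : List (Fin 2), w.length = n ∧ IsFactor w ∧
      ∀ l₁ l₂ : ℕ, (2 ^ (q - 1) - n % 2 ^ (q - 1)) % 2 ^ (q - 1) < l₁ + l₂ →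
        ∃ vv yy : List (Fin 2) × List (Fin 2), vv ≠ yy ∧
          vv.1.length = l₁ ∧ vv.2.length = l₂ ∧
          yy.1.length = l₁ ∧ yy.2.length = l₂ ∧
          IsFactor (vv.1 ++ w ++ vv.2) ∧ IsFactor (yy.1 ++ w ++ yy.2)) :=
  thueMorse_unique_extension_lower_bound_general n q hq h1 h2
end

section
/- For every n ≥ 4 the following three set identities hold: PAIRS(2n) = { n − y : y ∈ pairs(n+1) }; pairs(2n+1) = PAIRS(2n); and pairs(2n) = PAIRS(2n) ∪ PAIRS(2n−2). -/
/-!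
The Thue–Morse word is the fixed point of `0 ↦ 01, 1 ↦ 10`, so `t (2k) = t k` and
`t (2k+1) = t k + 1`. The two letters of a block `t (2k) t (2k+1)` always differ, while across a
block boundary `t (2k+1) = t (2k+2)` exactly when `t k ≠ t (k+1)`. Hence the factor of length
`2n+1` at `2k` can have pairs only at its `n` block boundaries, and has one there exactly where the
factor of length `n+1` at `k` has none: its pair count is `n - p`. Dropping the first letter of a
factor at an even position, or the last letter of an odd-length factor at an odd position, removes
an in-block neighbour relation and hence no pair; this moves every count to a pure odd factor of
the right length.
-/

namespace Nat

theorem count_add_count_not (p : ℕ → Prop) [DecidablePred p] (n : ℕ) :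
    count p n + count (fun k => ¬p k) n = n := by
  simp only [count_eq_card_filter_range]
  rw [Finset.card_filter_add_card_filter_not, Finset.card_range]

theorem count_two_mul (p : ℕ → Prop) [DecidablePred p] (n : ℕ) :
    count p (2 * n) = count (fun k => p (2 * k)) n + count (fun k => p (2 * k + 1)) n := by
  induction n with
  | zero => simp
  | succ n ih =>
    rw [show 2 * (n + 1) = 2 * n + 1 + 1 by ring, count_succ, count_succ, ih, count_succ,
      count_succ]
    ring

end Nat

lemma tm_two_mul_ne_succ (k : ℕ) : tm (2 * k) ≠ tm (2 * k + 1) := by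
  rw [tm_two_mul, tm_two_mul_add_one]
  generalize tm k = a
  revert a
  decide

lemma tm_two_mul_add_one_eq_succ_iff (k : ℕ) :
    tm (2 * k + 1) = tm (2 * k + 1 + 1) ↔ tm k ≠ tm (k + 1) := by
  rw [show 2 * k + 1 + 1 = 2 * (k + 1) by ring, tm_two_mul, tm_two_mul_add_one]
  generalize tm k = a; generalize tm (k + 1) = b
  revert a b
  decide

lemma occCount_cons (a : Fin 2) (u x : List (Fin 2)) :
    occCount (a :: u) x = (if (a :: u).take x.length = x then 1 else 0) + occCount u x := by
  unfold occCount
  rw [List.length_cons, List.range_succ_eq_map, List.filter_cons, List.filter_map]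
  by_cases h : (a :: u).take x.length = x <;> simp [h, Function.comp_def, add_comm]

lemma pword_singleton (a : Fin 2) : pword [a] = 0 := by
  simp [pword, occCount]

lemma pword_cons_cons (a b : Fin 2) (w : List (Fin 2)) :
    pword (a :: b :: w) = (if a = b then 1 else 0) + pword (b :: w) := by
  simp only [pword, occCount_cons, List.length_cons, List.length_nil, List.take_succ_cons,
    List.take_zero]
  fin_cases a <;> fin_cases b <;> simp <;> ring

lemma pword_map_range_succ (f : ℕ → Fin 2) (n : ℕ) :
    pword ((List.range (n + 1)).map f) = Nat.count (fun j => f j = f (j + 1)) n := by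
  induction n generalizing f with
  | zero => simp [pword_singleton]
  | succ n ih =>
    rw [List.range_succ_eq_map, List.map_cons, List.map_map, List.range_succ_eq_map,
      List.map_cons, pword_cons_cons, ← List.map_cons, ← List.range_succ_eq_map,
      ih, Nat.count_succ']
    simp only [Function.comp_def, Nat.succ_eq_add_one, zero_add]
    omega

lemma pword_tmWord_succ (i n : ℕ) :
    pword (tmWord i (n + 1)) = Nat.count (fun j => tm (i + j) = tm (i + j + 1)) n :=
  pword_map_range_succ _ n

lemma pword_tmWord_two_mul_succ (k n : ℕ) :
    pword (tmWord (2 * k) (n + 1)) = pword (tmWord (2 * k + 1) n) := by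
  cases n with
  | zero => simp [tmWord, pword, occCount]
  | succ n =>
    rw [pword_tmWord_succ, pword_tmWord_succ, Nat.count_succ']
    simp only [add_zero, if_neg (tm_two_mul_ne_succ k), ← add_assoc, add_right_comm _ 1]

lemma pword_tmWord_two_mul_two_mul_add_two (k n : ℕ) :
    pword (tmWord (2 * k) (2 * n + 2)) = pword (tmWord (2 * k) (2 * n + 1)) := by
  rw [pword_tmWord_succ, pword_tmWord_succ, Nat.count_succ, ← mul_add,
    if_neg (tm_two_mul_ne_succ (k + n)), add_zero]

lemma pword_tmWord_two_mul_two_mul_add_one (k n : ℕ) :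
    pword (tmWord (2 * k) (2 * n + 1)) = n - pword (tmWord k (n + 1)) := by
  have hinner : Nat.count (fun j => tm (2 * k + 2 * j) = tm (2 * k + 2 * j + 1)) n = 0 :=
    Nat.count_iff_forall_not.2 fun j _ => by rw [← mul_add]; exact tm_two_mul_ne_succ (k + j)
  have hboundary : ∀ j, tm (2 * k + (2 * j + 1)) = tm (2 * k + (2 * j + 1) + 1) ↔
      ¬tm (k + j) = tm (k + j + 1) := fun j => by
    rw [← add_assoc, ← mul_add]; exact tm_two_mul_add_one_eq_succ_iff (k + j)
  have hcount := Nat.count_add_count_not (fun j => tm (k + j) = tm (k + j + 1)) n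
  rw [pword_tmWord_succ, pword_tmWord_succ, Nat.count_two_mul, hinner]
  simp only [hboundary]
  omega

lemma pword_tmWord_two_mul_add_one_two_mul_add_one (k n : ℕ) :
    pword (tmWord (2 * k + 1) (2 * n + 1)) = pword (tmWord (2 * k + 1) (2 * n)) := by
  rw [← pword_tmWord_two_mul_succ, ← pword_tmWord_two_mul_succ,
    pword_tmWord_two_mul_two_mul_add_two]

lemma pairs_eq_range (n : ℕ) : pairs n = Set.range fun i => pword (tmWord i n) := by
  ext m
  constructor
  · rintro ⟨w, rfl, ⟨i, hw⟩, rfl⟩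
    exact ⟨i, congrArg pword hw.symm⟩
  · rintro ⟨i, rfl⟩
    exact ⟨tmWord i n, by simp [tmWord], ⟨i, by simp [tmWord]⟩, rfl⟩

lemma PAIRS_eq_range (n : ℕ) : PAIRS n = Set.range fun k => pword (tmWord (2 * k + 1) n) := by
  ext m
  constructor
  · rintro ⟨i, hi, rfl⟩
    obtain ⟨k, rfl⟩ : ∃ k, i = 2 * k + 1 := ⟨i / 2, by omega⟩
    exact ⟨k, rfl⟩
  · rintro ⟨k, rfl⟩
    exact ⟨2 * k + 1, by omega, rfl⟩

lemma pairs_eq_PAIRS_union (n : ℕ) :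
    pairs n = PAIRS n ∪ Set.range fun k => pword (tmWord (2 * k) n) := by
  rw [pairs_eq_range, PAIRS_eq_range]
  ext m
  constructor
  · rintro ⟨i, rfl⟩
    obtain ⟨k, rfl | rfl⟩ := Nat.even_or_odd' i
    · exact Or.inr ⟨k, rfl⟩
    · exact Or.inl ⟨k, rfl⟩
  · rintro (⟨k, rfl⟩ | ⟨k, rfl⟩) <;> exact ⟨_, rfl⟩

lemma range_pword_tmWord_two_mul_succ (n : ℕ) :
    (Set.range fun k => pword (tmWord (2 * k) (n + 1))) = PAIRS n := by
  simp only [PAIRS_eq_range, pword_tmWord_two_mul_succ]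

lemma PAIRS_two_mul_add_one (n : ℕ) : PAIRS (2 * n + 1) = PAIRS (2 * n) := by
  simp only [PAIRS_eq_range, pword_tmWord_two_mul_add_one_two_mul_add_one]

lemma PAIRS_two_mul (n : ℕ) : PAIRS (2 * n) = (fun y => n - y) '' pairs (n + 1) := by
  rw [PAIRS_eq_range, pairs_eq_range, ← Set.range_comp]
  simp only [← pword_tmWord_two_mul_succ, pword_tmWord_two_mul_two_mul_add_one]
  rfl

theorem thueMorse_pairs_recursion_general (n : ℕ) :
    PAIRS (2 * n) = (fun y => n - y) '' pairs (n + 1) ∧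
    pairs (2 * n + 1) = PAIRS (2 * n) ∧
    pairs (2 * n) = PAIRS (2 * n) ∪ PAIRS (2 * n - 2) := by
  refine ⟨PAIRS_two_mul n, ?_, ?_⟩
  · rw [pairs_eq_PAIRS_union, range_pword_tmWord_two_mul_succ, PAIRS_two_mul_add_one,
      Set.union_self]
  · rcases n with _ | n
    · simp [pairs_eq_range, PAIRS_eq_range, tmWord]
    · rw [pairs_eq_PAIRS_union, show 2 * (n + 1) = 2 * n + 1 + 1 by ring,
        range_pword_tmWord_two_mul_succ, PAIRS_two_mul_add_one,
        show 2 * n + 1 + 1 - 2 = 2 * n by omega]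

theorem thueMorse_pairs_recursion (n : ℕ) (hn : 4 ≤ n) :
    PAIRS (2 * n) = (fun y => n - y) '' pairs (n + 1) ∧
    pairs (2 * n + 1) = PAIRS (2 * n) ∧
    pairs (2 * n) = PAIRS (2 * n) ∪ PAIRS (2 * n - 2) :=
  thueMorse_pairs_recursion_general n
end
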